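/- If f*: V → W is a linear surjection and S is a maximally g-isotropic (Dirac) subspace of V ⊕ V*, then the push-forward f⃗*S = {(f*X, η) : (X, f*η) ∈ S} is a maximally g-isotropic subspace of W ⊕ W*. -/

import Mathlib

/-!
Write `B((X,α),(Y,μ)) = α(Y) + μ(X)`, twice the neutral metric. `B` is nondegenerate, so a
subspace of `V ⊕ V*` is isotropic of dimension `dim V` exactly when it equals its own
`B`-orthogonal. Isotropy of `f⃗*S` is immediate. Conversely, if `(f X, μ)` is orthogonal to
`f⃗*S`, then `(X, f*μ)` is orthogonal to `S ∩ (ker f × 0)^⊥`, because the covectors vanishing on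
`ker f` are exactly the pullbacks `f*η`. Taking orthogonals, `(X, f*μ) ∈ S + (ker f × 0)`, which
exhibits `(f X, μ)` as the push-forward of an element of `S`.
-/

open LinearMap

/-- The neutral metric `g((X,α),(Y,μ)) = (α(Y) + μ(X))/2` on `V ⊕ V*`. -/
noncomputable def neutralMetric (V : Type*) [AddCommGroup V] [Module ℝ V] :
    (V × Module.Dual ℝ V) → (V × Module.Dual ℝ V) → ℝ :=
  fun p q => (p.2 q.1 + q.2 p.1) / 2

/-- The push-forward `f⃗*S = {(f*X, η) : (X, f*η) ∈ S}` of a subspace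
`S ⊆ V ⊕ V*` along a linear map `f : V → W`. -/
noncomputable def Pushforward {V W : Type*} [AddCommGroup V] [Module ℝ V]
    [AddCommGroup W] [Module ℝ W] (f : V →ₗ[ℝ] W)
    (S : Submodule ℝ (V × Module.Dual ℝ V)) :
    Submodule ℝ (W × Module.Dual ℝ W) :=
  Submodule.map (LinearMap.prodMap f LinearMap.id)
    (Submodule.comap (LinearMap.prodMap LinearMap.id f.dualMap) S)

namespace LinearMap.BilinForm

variable {R M : Type*} [CommRing R] [AddCommGroup M] [Module R M]

theorem orthogonal_sup (B : LinearMap.BilinForm R M) (N L : Submodule R M) :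
    B.orthogonal (N ⊔ L) = B.orthogonal N ⊓ B.orthogonal L := by
  refine le_antisymm (le_inf (B.orthogonal_le le_sup_left) (B.orthogonal_le le_sup_right)) ?_
  rintro x ⟨hN, hL⟩ y hy
  obtain ⟨n, hn, l, hl, rfl⟩ := Submodule.mem_sup.mp hy
  simp only [map_add, LinearMap.add_apply, hN n hn, hL l hl, add_zero]

variable {K V : Type*} [Field K] [AddCommGroup V] [Module K V] [FiniteDimensional K V]
  {B : LinearMap.BilinForm K V}

theorem orthogonal_inf (hB : B.Nondegenerate) (hB₀ : B.IsRefl) (N L : Submodule K V) :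
    B.orthogonal (N ⊓ L) = B.orthogonal N ⊔ B.orthogonal L := by
  conv_lhs => rw [← orthogonal_orthogonal hB hB₀ N, ← orthogonal_orthogonal hB hB₀ L,
    ← orthogonal_sup, orthogonal_orthogonal hB hB₀]

theorem orthogonal_eq_self_iff (hB : B.Nondegenerate) (L : Submodule K V) :
    B.orthogonal L = L ↔
      L ≤ B.orthogonal L ∧ Module.finrank K L + Module.finrank K L = Module.finrank K V := by
  have hdim := finrank_orthogonal hB L
  have hle := L.finrank_le
  refine ⟨fun h => ⟨h.ge, by rw [h] at hdim; omega⟩, fun ⟨hiso, hL⟩ => ?_⟩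
  exact (Submodule.eq_of_le_of_finrank_le hiso (by omega)).symm

end LinearMap.BilinForm

section DualPairing

variable (R M : Type*) [CommRing R] [AddCommGroup M] [Module R M]

def dualPairing : LinearMap.BilinForm R (M × Module.Dual R M) :=
  mk₂ R (fun p q => p.2 q.1 + q.2 p.1)
    (fun _ _ _ => by
      simp only [Prod.fst_add, Prod.snd_add, map_add, LinearMap.add_apply]; ring)
    (fun _ _ _ => by
      simp only [Prod.smul_fst, Prod.smul_snd, map_smul, LinearMap.smul_apply, smul_eq_mul]; ring)
    (fun _ _ _ => by
      simp only [Prod.fst_add, Prod.snd_add, map_add, LinearMap.add_apply]; ring)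
    (fun _ _ _ => by
      simp only [Prod.smul_fst, Prod.smul_snd, map_smul, LinearMap.smul_apply, smul_eq_mul]; ring)

variable {R M}

@[simp]
theorem dualPairing_apply (p q : M × Module.Dual R M) :
    dualPairing R M p q = p.2 q.1 + q.2 p.1 := rfl

theorem dualPairing_isRefl : (dualPairing R M).IsRefl := by
  intro p q h
  rwa [dualPairing_apply, add_comm] at h

theorem mem_dualPairing_orthogonal_prod_bot_iff {N : Submodule R M} {p : M × Module.Dual R M} :
    p ∈ (dualPairing R M).orthogonal (N.prod ⊥) ↔ p.2 ∈ N.dualAnnihilator := by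
  simp [Submodule.mem_dualAnnihilator]

end DualPairing

theorem dualPairing_nondegenerate (K V : Type*) [Field K] [AddCommGroup V] [Module K V] :
    (dualPairing K V).Nondegenerate := by
  suffices h : ∀ p : V × Module.Dual K V, (∀ q, dualPairing K V p q = 0) → p = 0 from
    ⟨h, fun p hp => h p fun q => dualPairing_isRefl q p (hp q)⟩
  rintro ⟨X, α⟩ hp
  obtain rfl : α = 0 := LinearMap.ext fun Y => by simpa using hp (Y, 0)
  obtain rfl : X = 0 :=
    (Module.forall_dual_apply_eq_zero_iff K X).mp fun φ => by simpa using hp (0, φ)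
  rfl

theorem neutralMetric_eq_zero_iff {V : Type*} [AddCommGroup V] [Module ℝ V]
    {p q : V × Module.Dual ℝ V} :
    neutralMetric V p q = 0 ↔ dualPairing ℝ V p q = 0 := by
  simp [neutralMetric]

section Pushforward

variable {V W : Type*} [AddCommGroup V] [Module ℝ V] [AddCommGroup W] [Module ℝ W]
  {f : V →ₗ[ℝ] W} {S : Submodule ℝ (V × Module.Dual ℝ V)}

theorem pushforward_le_orthogonal (hS : S ≤ (dualPairing ℝ V).orthogonal S) :
    Pushforward f S ≤ (dualPairing ℝ W).orthogonal (Pushforward f S) := by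
  rintro _ ⟨⟨X, η⟩, hXη, rfl⟩ _ ⟨⟨Y, μ⟩, hYμ, rfl⟩
  simpa using hS hXη _ hYμ

theorem orthogonal_pushforward_le [FiniteDimensional ℝ V] (hf : Function.Surjective f)
    (hS : (dualPairing ℝ V).orthogonal S = S) :
    (dualPairing ℝ W).orthogonal (Pushforward f S) ≤ Pushforward f S := by
  rintro ⟨Y, μ⟩ hYμ
  obtain ⟨X, rfl⟩ := hf Y
  have hperp : (X, f.dualMap μ) ∈
      (dualPairing ℝ V).orthogonal (S ⊓ (dualPairing ℝ V).orthogonal ((ker f).prod ⊥)) := by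
    rintro ⟨X', α⟩ ⟨hX'α, hα⟩
    obtain ⟨η, rfl⟩ : α ∈ range f.dualMap := by
      rw [range_dualMap_eq_dualAnnihilator_ker]
      exact mem_dualPairing_orthogonal_prod_bot_iff.mp hα
    simpa using hYμ (f X', η) ⟨(X', η), hX'α, rfl⟩
  rw [BilinForm.orthogonal_inf (dualPairing_nondegenerate ℝ V) dualPairing_isRefl, hS,
    BilinForm.orthogonal_orthogonal (dualPairing_nondegenerate ℝ V) dualPairing_isRefl] at hperp
  obtain ⟨⟨X', α⟩, hX'α, ⟨k, κ⟩, ⟨hk, hκ⟩, hsum⟩ := Submodule.mem_sup.mp hperp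
  obtain rfl : κ = 0 := (Submodule.mem_bot ℝ).mp hκ
  obtain ⟨rfl, rfl⟩ : X' + k = X ∧ α = f.dualMap μ := by simpa using hsum
  exact ⟨(X', μ), hX'α, by simp [mem_ker.mp hk]⟩

end Pushforward

/-- The push-forward of a maximally `g`-isotropic (Dirac) subspace of `V ⊕ V*`
along a linear surjection `f : V → W` is a maximally `g`-isotropic subspace of
`W ⊕ W*`. -/
theorem pushforward_dirac
    (V W : Type*) [AddCommGroup V] [Module ℝ V] [FiniteDimensional ℝ V]
    [AddCommGroup W] [Module ℝ W] [FiniteDimensional ℝ W]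
    (f : V →ₗ[ℝ] W) (hf : Function.Surjective f)
    (S : Submodule ℝ (V × Module.Dual ℝ V))
    (hiso : ∀ p ∈ S, ∀ q ∈ S, neutralMetric V p q = 0)
    (hmax : Module.finrank ℝ S = Module.finrank ℝ V) :
    (∀ p ∈ Pushforward f S, ∀ q ∈ Pushforward f S, neutralMetric W p q = 0) ∧
    Module.finrank ℝ (Pushforward f S) = Module.finrank ℝ W := by
  have hS : (dualPairing ℝ V).orthogonal S = S := by
    refine (BilinForm.orthogonal_eq_self_iff (dualPairing_nondegenerate ℝ V) S).mpr
      ⟨fun q hq p hp => neutralMetric_eq_zero_iff.mp (hiso p hp q hq), ?_⟩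
    rw [Module.finrank_prod, Subspace.dual_finrank_eq, hmax]
  have hP : (dualPairing ℝ W).orthogonal (Pushforward f S) = Pushforward f S :=
    le_antisymm (orthogonal_pushforward_le hf hS) (pushforward_le_orthogonal hS.ge)
  obtain ⟨hPiso, hPdim⟩ :=
    (BilinForm.orthogonal_eq_self_iff (dualPairing_nondegenerate ℝ W) _).mp hP
  rw [Module.finrank_prod, Subspace.dual_finrank_eq] at hPdim
  exact ⟨fun p hp q hq => neutralMetric_eq_zero_iff.mpr (hPiso hq p hp), by omega⟩
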